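/- arXiv:1902.11025 — 3 statements merged into one kernel-verified Lean document; each statement's English description precedes it below -/
import Mathlib

section
/- Let the support of ω be partitioned into W disjoint measurable subregions Ω₁,…,Ω_W with probabilities p_k = Pr{ω ∈ Ω_k} and conditional means E[ω|Ω_k]. Then for every real x, the complementary first-order loss function satisfies L̂(x,ω) ≥ max over i ∈ {0,1,…,W} of ( x·Σ_{k≤i} p_k − Σ_{k≤i} p_k E[ω|Ω_k] ); that is, the piecewise linear function with W+1 segments given by these maxima is a lower bound on L̂. -/
open MeasureTheory Function

/-! Each term `p k * (x - m k)` is the integral of `x - X` over `A k`, which is at most the integral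
of the positive part `(x - X)⁺` over `A k`; since the `A k` are disjoint and `(x - X)⁺ ≥ 0`, summing
over `k < i` gives at most the integral of `(x - X)⁺` over the whole space. -/

section

variable {Ω : Type*} [MeasurableSpace Ω] {μ : Measure Ω}

theorem setIntegral_const_sub {A : Set Ω} (hA : μ A ≠ ⊤) {X : Ω → ℝ} (hX : IntegrableOn X A μ)
    (c : ℝ) : ∫ ω in A, (c - X ω) ∂μ = c * μ.real A - ∫ ω in A, X ω ∂μ := by
  rw [integral_sub (integrableOn_const (C := c) hA) hX, setIntegral_const, smul_eq_mul, mul_comm]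

theorem sum_setIntegral_le_integral {ι : Type*} {f : Ω → ℝ} (hf : Integrable f μ)
    (hf0 : 0 ≤ᵐ[μ] f) (s : Finset ι) {A : ι → Set Ω} (hA : ∀ k ∈ s, MeasurableSet (A k))
    (hdisj : Set.Pairwise (↑s) (Disjoint on A)) :
    ∑ k ∈ s, ∫ ω in A k, f ω ∂μ ≤ ∫ ω, f ω ∂μ := by
  rw [← integral_biUnion_finset s hA hdisj fun _ _ => hf.integrableOn]
  exact setIntegral_le_integral hf hf0

end

theorem complLoss_jensen_lower_bound_general {Ω : Type*} [MeasurableSpace Ω] (μ : Measure Ω)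
    [IsProbabilityMeasure μ] (X : Ω → ℝ) (hX : Integrable X μ)
    (W : ℕ) (A : ℕ → Set Ω)
    (hmeas : ∀ k < W, MeasurableSet (A k))
    (hdisj : ∀ k < W, ∀ l < W, k ≠ l → Disjoint (A k) (A l))
    (p : ℕ → ℝ) (hp : ∀ k < W, p k = (μ (A k)).toReal)
    (hppos : ∀ k < W, 0 < p k)
    (m : ℕ → ℝ) (hm : ∀ k < W, m k = (∫ ω in A k, X ω ∂μ) / p k)
    (x : ℝ) (i : ℕ) (hi : i ≤ W) :
    x * (∑ k ∈ Finset.range i, p k) - ∑ k ∈ Finset.range i, p k * m k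
      ≤ ∫ ω, max (x - X ω) 0 ∂μ := by
  have hlt {k : ℕ} (hk : k ∈ Finset.range i) : k < W := (Finset.mem_range.mp hk).trans_le hi
  have hsub : Integrable (fun ω => x - X ω) μ := (integrable_const x).sub hX
  have hterm : ∀ k ∈ Finset.range i, x * p k - p k * m k = ∫ ω in A k, (x - X ω) ∂μ := by
    intro k hk
    rw [setIntegral_const_sub (measure_ne_top μ _) hX.integrableOn, measureReal_def,
      ← hp k (hlt hk), hm k (hlt hk), mul_div_cancel₀ _ (hppos k (hlt hk)).ne']
  calc x * (∑ k ∈ Finset.range i, p k) - ∑ k ∈ Finset.range i, p k * m k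
      = ∑ k ∈ Finset.range i, ∫ ω in A k, (x - X ω) ∂μ := by
        rw [Finset.mul_sum, ← Finset.sum_sub_distrib]
        exact Finset.sum_congr rfl hterm
    _ ≤ ∑ k ∈ Finset.range i, ∫ ω in A k, max (x - X ω) 0 ∂μ :=
        Finset.sum_le_sum fun k _ =>
          setIntegral_mono hsub.integrableOn hsub.pos_part.integrableOn fun _ => le_max_left _ _
    _ ≤ ∫ ω, max (x - X ω) 0 ∂μ :=
        sum_setIntegral_le_integral hsub.pos_part (.of_forall fun _ => le_max_right _ _) _
          (fun k hk => hmeas k (hlt hk)) fun k hk l hl hkl => hdisj k (hlt hk) l (hlt hl) hkl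

/-- Jensen's piecewise lower bound (Lemma 1): if the support of `X` is partitioned into `W`
disjoint measurable subregions `A 0, …, A (W-1)` with probabilities `p k` and conditional means
`m k`, then for every real `x` and every `i ∈ {0,…,W}`, the complementary first-order loss
function satisfies `L̂(x,X) ≥ x·Σ_{k<i} p k − Σ_{k<i} p k * m k`; hence the piecewise linear
function given by the maximum of these `W+1` affine segments is a lower bound on `L̂`. -/
theorem complLoss_jensen_lower_bound {Ω : Type*} [MeasurableSpace Ω] (μ : Measure Ω)
    [IsProbabilityMeasure μ] (X : Ω → ℝ) (hX : Integrable X μ)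
    (W : ℕ) (A : ℕ → Set Ω)
    (hmeas : ∀ k < W, MeasurableSet (A k))
    (hdisj : ∀ k < W, ∀ l < W, k ≠ l → Disjoint (A k) (A l))
    (hcover : μ (⋃ k ∈ Finset.range W, A k) = 1)
    (p : ℕ → ℝ) (hp : ∀ k < W, p k = (μ (A k)).toReal)
    (hppos : ∀ k < W, 0 < p k)
    (m : ℕ → ℝ) (hm : ∀ k < W, m k = (∫ ω in A k, X ω ∂μ) / p k)
    (x : ℝ) (i : ℕ) (hi : i ≤ W) :
    x * (∑ k ∈ Finset.range i, p k) - ∑ k ∈ Finset.range i, p k * m k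
      ≤ ∫ ω, max (x - X ω) 0 ∂μ :=
  complLoss_jensen_lower_bound_general μ X hX W A hmeas hdisj p hp hppos m hm x i hi
end

section
/- With the same partition as above, for every real x the first-order loss function satisfies L(x,ω) ≥ x·Σ_{k≤i} p_k − Σ_{k≤i} p_k E[ω|Ω_k] + (E[ω] − x) for each i ∈ {0,…,W}; in particular L(x,ω) ≥ L̂_lb(x,ω) − x + E[ω] where L̂_lb is the piecewise-linear Jensen lower bound of the complementary loss function. -/
/-!
On the union `B` of the first `i` cells, `x * Σ p k - Σ p k * m k` is `∫_B (x - X)`, so the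
left-hand side equals `∫_{Bᶜ} (X - x)`, which is at most `∫_{Bᶜ} (X - x)⁺ ≤ E[(X - x)⁺]`.
-/

open MeasureTheory

namespace MeasureTheory

variable {Ω : Type*} [MeasurableSpace Ω] {μ : Measure Ω} {X : Ω → ℝ}

theorem setIntegral_sub_le_integral_max_sub_zero [IsFiniteMeasure μ] (hX : Integrable X μ)
    (s : Set Ω) (x : ℝ) : ∫ ω in s, (X ω - x) ∂μ ≤ ∫ ω, max (X ω - x) 0 ∂μ := by
  have hmax : Integrable (fun ω => max (X ω - x) 0) μ := (hX.sub (integrable_const x)).pos_part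
  calc ∫ ω in s, (X ω - x) ∂μ ≤ ∫ ω in s, max (X ω - x) 0 ∂μ :=
        integral_mono (hX.sub (integrable_const x)).integrableOn hmax.integrableOn
          fun ω => le_max_left _ _
    _ ≤ ∫ ω, max (X ω - x) 0 ∂μ :=
        setIntegral_le_integral hmax (.of_forall fun ω => le_max_right _ _)

theorem setIntegral_compl_sub_const [IsProbabilityMeasure μ] (hX : Integrable X μ) {s : Set Ω}
    (hs : MeasurableSet s) (x : ℝ) :
    ∫ ω in sᶜ, (X ω - x) ∂μ = x * μ.real s - ∫ ω in s, X ω ∂μ + (∫ ω, X ω ∂μ - x) := by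
  rw [integral_sub hX.integrableOn (integrableOn_const (measure_ne_top μ _)), setIntegral_const,
    measureReal_compl hs, probReal_univ, ← integral_add_compl hs hX, smul_eq_mul]
  ring

theorem measureReal_mul_setIntegral_div [IsFiniteMeasure μ] (s : Set Ω) :
    μ.real s * ((∫ ω in s, X ω ∂μ) / μ.real s) = ∫ ω in s, X ω ∂μ := by
  by_cases hs : μ.real s = 0
  · rw [setIntegral_measure_zero X ((measureReal_eq_zero_iff (measure_ne_top μ s)).mp hs)]
    simp
  · exact mul_div_cancel₀ _ hs

end MeasureTheory

theorem loss_jensen_lower_bound_general {Ω : Type*} [MeasurableSpace Ω] (μ : Measure Ω)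
    [IsProbabilityMeasure μ] (X : Ω → ℝ) (hX : Integrable X μ)
    (W : ℕ) (A : ℕ → Set Ω)
    (hmeas : ∀ k < W, MeasurableSet (A k))
    (hdisj : ∀ k < W, ∀ l < W, k ≠ l → Disjoint (A k) (A l))
    (p : ℕ → ℝ) (hp : ∀ k < W, p k = (μ (A k)).toReal)
    (m : ℕ → ℝ) (hm : ∀ k < W, m k = (∫ ω in A k, X ω ∂μ) / p k)
    (x : ℝ) (i : ℕ) (hi : i ≤ W) :
    x * (∑ k ∈ Finset.range i, p k) - (∑ k ∈ Finset.range i, p k * m k)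
        + ((∫ ω, X ω ∂μ) - x)
      ≤ ∫ ω, max (X ω - x) 0 ∂μ := by
  have hlt : ∀ k ∈ Finset.range i, k < W := fun k hk => (Finset.mem_range.mp hk).trans_le hi
  have hA : ∀ k ∈ Finset.range i, MeasurableSet (A k) := fun k hk => hmeas k (hlt k hk)
  have hAdisj : (↑(Finset.range i) : Set ℕ).PairwiseDisjoint A := fun k hk l hl hkl =>
    hdisj k (hlt k hk) l (hlt l hl) hkl
  have hp_sum : ∑ k ∈ Finset.range i, p k = μ.real (⋃ k ∈ Finset.range i, A k) := by
    rw [measureReal_biUnion_finset hAdisj hA]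
    exact Finset.sum_congr rfl fun k hk => hp k (hlt k hk)
  have hpm_sum : ∑ k ∈ Finset.range i, p k * m k = ∫ ω in ⋃ k ∈ Finset.range i, A k, X ω ∂μ := by
    rw [integral_biUnion_finset _ hA hAdisj fun k _ => hX.integrableOn]
    refine Finset.sum_congr rfl fun k hk => ?_
    rw [hm k (hlt k hk), hp k (hlt k hk)]
    exact measureReal_mul_setIntegral_div _
  rw [hp_sum, hpm_sum, ← setIntegral_compl_sub_const hX (Finset.measurableSet_biUnion _ hA)]
  exact setIntegral_sub_le_integral_max_sub_zero hX _ x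

/-- Jensen's piecewise lower bound for the first-order loss function: with the partition as in
Lemma 1, for every real `x` and every `i ∈ {0,…,W}`,
`L(x,X) ≥ x·Σ_{k<i} p k − Σ_{k<i} p k * m k + (E[X] − x)`; in particular
`L(x,X) ≥ L̂_lb(x,X) − x + E[X]`. -/
theorem loss_jensen_lower_bound {Ω : Type*} [MeasurableSpace Ω] (μ : Measure Ω)
    [IsProbabilityMeasure μ] (X : Ω → ℝ) (hX : Integrable X μ)
    (W : ℕ) (A : ℕ → Set Ω)
    (hmeas : ∀ k < W, MeasurableSet (A k))
    (hdisj : ∀ k < W, ∀ l < W, k ≠ l → Disjoint (A k) (A l))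
    (hcover : μ (⋃ k ∈ Finset.range W, A k) = 1)
    (p : ℕ → ℝ) (hp : ∀ k < W, p k = (μ (A k)).toReal)
    (hppos : ∀ k < W, 0 < p k)
    (m : ℕ → ℝ) (hm : ∀ k < W, m k = (∫ ω in A k, X ω ∂μ) / p k)
    (x : ℝ) (i : ℕ) (hi : i ≤ W) :
    x * (∑ k ∈ Finset.range i, p k) - (∑ k ∈ Finset.range i, p k * m k)
        + ((∫ ω, X ω ∂μ) - x)
      ≤ ∫ ω, max (X ω - x) 0 ∂μ :=
  loss_jensen_lower_bound_general μ X hX W A hmeas hdisj p hp m hm x i hi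
end

section
/- If G: ℝ → ℝ is continuous, K-convex, and coercive with global minimizer S, then the set {x ≤ S : G(x) > G(S) + K} is an interval of the form (−∞, s) ∩ (−∞, S] for some s ≤ S; i.e., if G(x) ≤ G(S) + K and x ≤ y ≤ S then G(y) ≤ G(S) + K. -/
/-- `G : ℝ → ℝ` is `K`-convex if for all `x ≤ z` and `a ∈ [0,1]`,
`G(a x + (1−a) z) ≤ a G(x) + (1−a)(G(z) + K·δ(z−x))`, where `δ(0) = 0` and `δ(u) = 1`
for `u > 0`. -/
def KConvexOn (K : ℝ) (G : ℝ → ℝ) : Prop :=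
  ∀ x z : ℝ, x ≤ z → ∀ a : ℝ, 0 ≤ a → a ≤ 1 →
    G (a * x + (1 - a) * z) ≤ a * G x + (1 - a) * (G z + K * (if x < z then 1 else 0))

open Set

theorem KConvexOn.le_max_of_mem_Icc {K : ℝ} {G : ℝ → ℝ} (hG : KConvexOn K G) {x y z : ℝ}
    (hy : y ∈ Icc x z) : G y ≤ max (G x) (G z + K) := by
  obtain rfl | hxz := (hy.1.trans hy.2).eq_or_lt
  · obtain rfl : y = x := le_antisymm hy.2 hy.1
    exact le_max_left _ _
  rw [← segment_eq_Icc hxz.le] at hy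
  obtain ⟨a, b, ha, hb, hab, rfl⟩ := hy
  obtain rfl : b = 1 - a := by linarith
  calc G (a • x + (1 - a) • z)
      ≤ a * G x + (1 - a) * (G z + K) := by
        simpa only [smul_eq_mul, if_pos hxz, mul_one] using hG x z hxz.le a ha (by linarith)
    _ ≤ max (G x) (G z + K) := Convex.combo_le_max _ _ ha hb (add_sub_cancel a 1)

theorem kConvex_threshold_interval_general (K : ℝ) (G : ℝ → ℝ)
    (hkc : KConvexOn K G)
    (S : ℝ) :
    ∀ x y : ℝ, G x ≤ G S + K → x ≤ y → y ≤ S → G y ≤ G S + K :=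
  fun _ _ hx hxy hyS => (hkc.le_max_of_mem_Icc ⟨hxy, hyS⟩).trans (max_le hx le_rfl)

/-- If `G : ℝ → ℝ` is continuous, `K`-convex, and coercive with global minimizer `S`, then
the set `{x ≤ S : G(x) > G(S) + K}` is a lower interval: if `G(x) ≤ G(S) + K` and
`x ≤ y ≤ S` then `G(y) ≤ G(S) + K`. -/
theorem kConvex_threshold_interval (K : ℝ) (hK : 0 ≤ K) (G : ℝ → ℝ)
    (hcont : Continuous G) (hkc : KConvexOn K G)
    (hcoer : Filter.Tendsto G (Filter.cocompact ℝ) Filter.atTop)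
    (S : ℝ) (hS : ∀ x, G S ≤ G x) :
    ∀ x y : ℝ, G x ≤ G S + K → x ≤ y → y ≤ S → G y ≤ G S + K :=
  kConvex_threshold_interval_general K G hkc S
end
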